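/- Multiplication formula for Hermite polynomials: for every nonnegative integer k, nonzero real ρ, and real x, H_k(ρx) = k!·∑_{m=0}^{⌊k/2⌋} ρ^{k−2m}·(ρ²−1)^m/(m!·(k−2m)!)·H_{k−2m}(x) (equivalently ρ^k·(1−1/ρ²)^m in place of ρ^{k−2m}·(ρ²−1)^m). -/

import Mathlib

open Real MeasureTheory

/-- The physicists' Hermite polynomials: `H 0 = 1`, `H (k+1) = 2·X·H k − (H k)'`. -/
noncomputable def hermiteP : ℕ → Polynomial ℝ
  | 0 => 1
  | n + 1 => 2 * (Polynomial.X * hermiteP n) - Polynomial.derivative (hermiteP n)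

/-- The k-th physicists' Hermite polynomial as a function on ℝ. -/
noncomputable def H (k : ℕ) (x : ℝ) : ℝ := (hermiteP k).eval x

/-- The normalization constants `α k = (2^k · k! · √π)^{-1/2}`. -/
noncomputable def α (k : ℕ) : ℝ :=
  ((2 : ℝ) ^ k * (Nat.factorial k : ℝ) * Real.sqrt π) ^ (-(1 / 2 : ℝ))

/-- The normalized Hermite functions `h k x = α k · H k x · e^{-x²/2}`. -/
noncomputable def h (k : ℕ) (x : ℝ) : ℝ := α k * H k x * Real.exp (-x ^ 2 / 2)

/-!
The exponential generating function `G_x(t) = ∑ₖ H_k(x) tᵏ / k!` is the power series solution of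
`G' = (2x - 2t) G` with `G(0) = 1` (the three-term recurrence of the `H_k`, read coefficientwise).
The product `G_x(ρt) · exp((ρ² - 1) t²)` solves the same equation with `x` replaced by `ρx`, because
`-2ρ² t + 2 (ρ² - 1) t = -2t`; hence it equals `G_{ρx}(t)`, and comparing the coefficients of `tᵏ`
gives the formula.
-/

open scoped Nat

section Recurrence

open Polynomial

theorem derivative_hermiteP_succ (n : ℕ) :
    derivative (hermiteP (n + 1)) = 2 * (n + 1 : ℝ[X]) * hermiteP n := by
  induction n with
  | zero => simp [hermiteP]
  | succ n ih =>
    rw [hermiteP, derivative_sub, derivative_mul, derivative_mul, ih]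
    simp only [derivative_mul, derivative_X, derivative_ofNat, derivative_add, derivative_natCast,
      derivative_one]
    rw [hermiteP]
    push_cast
    ring

theorem hermiteP_succ_succ (n : ℕ) :
    hermiteP (n + 2) = 2 * X * hermiteP (n + 1) - 2 * (n + 1 : ℝ[X]) * hermiteP n := by
  rw [hermiteP, derivative_hermiteP_succ]
  ring

end Recurrence

theorem H_zero (x : ℝ) : H 0 x = 1 := by simp [H, hermiteP]

theorem H_one (x : ℝ) : H 1 x = 2 * x := by simp [H, hermiteP]

theorem H_succ_succ (n : ℕ) (x : ℝ) :
    H (n + 2) x = 2 * x * H (n + 1) x - 2 * (n + 1) * H n x := by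
  simp [H, hermiteP_succ_succ]

namespace PowerSeries

theorem eq_of_derivative_eq_mul {K : Type*} [Field K] [CharZero K] {a f g : K⟦X⟧}
    (hf : d⁄dX K f = a * f) (hg : d⁄dX K g = a * g) (hg0 : constantCoeff g ≠ 0)
    (h0 : constantCoeff f = constantCoeff g) : f = g := by
  have hinv : g * g⁻¹ = 1 := PowerSeries.mul_inv_cancel g hg0
  have hquot : f * g⁻¹ = 1 := by
    refine derivative.ext ?_ (by simp [constantCoeff_inv, h0, hg0])
    rw [Derivation.leibniz, derivative_inv', hf, hg, derivative_one, smul_eq_mul, smul_eq_mul]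
    linear_combination (-(a * f * g⁻¹)) * hinv
  linear_combination g * hquot - f * hinv

variable {R : Type*}

theorem rescale_C [CommSemiring R] (a r : R) : rescale a (C r) = C r := by
  ext n
  rcases n with _ | n <;> simp [coeff_rescale, coeff_C]

@[simp]
theorem constantCoeff_rescale [CommSemiring R] (a : R) (f : R⟦X⟧) :
    constantCoeff (rescale a f) = constantCoeff f := by
  rw [← coeff_zero_eq_constantCoeff_apply, coeff_rescale, pow_zero, one_mul,
    coeff_zero_eq_constantCoeff_apply]

theorem derivative_rescale [CommRing R] (a : R) (f : R⟦X⟧) :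
    d⁄dX R (rescale a f) = C a * rescale a (d⁄dX R f) := by
  ext n
  simp only [coeff_derivative, coeff_rescale, coeff_C_mul, pow_succ]
  ring

theorem derivative_expand [CommRing R] (p : ℕ) (hp : p ≠ 0) (f : R⟦X⟧) :
    d⁄dX R (expand p hp f) = expand p hp (d⁄dX R f) * ((p : R⟦X⟧) * X ^ (p - 1)) := by
  rw [expand_apply, expand_apply, derivative_subst (HasSubst.X_pow hp), derivative_pow,
    derivative_X, mul_one]

theorem coeff_mul_expand [CommRing R] (p : ℕ) (hp : p ≠ 0) (f g : R⟦X⟧) (k : ℕ) :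
    coeff k (f * expand p hp g) =
      ∑ m ∈ Finset.range (k / p + 1), coeff (k - p * m) f * coeff m g := by
  have hmem_range {m : ℕ} : m ∈ Finset.range (k / p + 1) ↔ p * m ≤ k := by
    rw [Finset.mem_range, Nat.lt_succ_iff, Nat.le_div_iff_mul_le (Nat.pos_of_ne_zero hp), mul_comm]
  have hinj : Set.InjOn (p * ·) (Finset.range (k / p + 1)) :=
    fun a _ b _ h => Nat.eq_of_mul_eq_mul_left (Nat.pos_of_ne_zero hp) h
  rw [mul_comm, coeff_mul,
    Finset.Nat.sum_antidiagonal_eq_sum_range_succ fun i j => coeff i (expand p hp g) * coeff j f,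
    ← Finset.sum_subset (s₁ := (Finset.range (k / p + 1)).image (p * ·)), Finset.sum_image hinj]
  · simp [mul_comm]
  · intro j hj
    obtain ⟨m, hm, rfl⟩ := Finset.mem_image.1 hj
    exact Finset.mem_range.2 (Nat.lt_succ_of_le (hmem_range.1 hm))
  · intro j hjk hj
    rw [coeff_expand_of_not_dvd, zero_mul]
    rintro ⟨m, rfl⟩
    exact hj (Finset.mem_image.2
      ⟨m, hmem_range.2 (Nat.le_of_lt_succ (Finset.mem_range.1 hjk)), rfl⟩)

end PowerSeries

open PowerSeries

noncomputable def hermiteGF (x : ℝ) : ℝ⟦X⟧ := mk fun k => H k x / k !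

@[simp]
theorem coeff_hermiteGF (x : ℝ) (k : ℕ) : coeff k (hermiteGF x) = H k x / k ! := coeff_mk _ _

@[simp]
theorem constantCoeff_hermiteGF (x : ℝ) : constantCoeff (hermiteGF x) = 1 := by
  simp [← coeff_zero_eq_constantCoeff_apply, H_zero]

theorem derivative_hermiteGF (x : ℝ) :
    d⁄dX ℝ (hermiteGF x) = (C (2 * x) - 2 * X) * hermiteGF x := by
  ext n
  rw [coeff_derivative, sub_mul, map_sub, mul_assoc, coeff_C_mul]
  cases n with
  | zero => simp [H_zero, H_one]
  | succ n =>
    rw [← map_ofNat C 2, coeff_C_mul, coeff_succ_X_mul, coeff_hermiteGF, coeff_hermiteGF,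
      coeff_hermiteGF, H_succ_succ, Nat.factorial_succ (n + 1), Nat.factorial_succ n]
    push_cast
    field_simp

theorem hermiteGF_mul (ρ x : ℝ) :
    hermiteGF (ρ * x) =
      rescale ρ (hermiteGF x) * expand 2 two_ne_zero (rescale (ρ ^ 2 - 1) (exp ℝ)) := by
  refine eq_of_derivative_eq_mul (derivative_hermiteGF _) ?_ (by simp) (by simp)
  rw [Derivation.leibniz, derivative_expand, derivative_rescale, derivative_rescale,
    derivative_exp, derivative_hermiteGF, smul_eq_mul, smul_eq_mul]
  simp only [map_mul, map_sub, rescale_X, rescale_C, expand_C, map_pow, map_one, map_ofNat,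
    Nat.cast_ofNat, Nat.add_one_sub_one, pow_one]
  ring

theorem stmt_6_general (k : ℕ) (ρ : ℝ) (x : ℝ) :
    H k (ρ * x) =
      (Nat.factorial k : ℝ) *
        ∑ m ∈ Finset.range (k / 2 + 1),
          ρ ^ (k - 2 * m) * (ρ ^ 2 - 1) ^ m /
              ((Nat.factorial m : ℝ) * (Nat.factorial (k - 2 * m) : ℝ)) *
            H (k - 2 * m) x := by
  have hk := congrArg (coeff k) (hermiteGF_mul ρ x)
  rw [coeff_hermiteGF, coeff_mul_expand, div_eq_iff (by positivity)] at hk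
  rw [hk, mul_comm, Finset.mul_sum, Finset.mul_sum]
  refine Finset.sum_congr rfl fun m _ => ?_
  rw [coeff_rescale, coeff_rescale, coeff_hermiteGF, coeff_exp, map_div₀, map_one, map_natCast]
  ring

theorem stmt_6 (k : ℕ) (ρ : ℝ) (hρ : ρ ≠ 0) (x : ℝ) :
    H k (ρ * x) =
      (Nat.factorial k : ℝ) *
        ∑ m ∈ Finset.range (k / 2 + 1),
          ρ ^ (k - 2 * m) * (ρ ^ 2 - 1) ^ m /
              ((Nat.factorial m : ℝ) * (Nat.factorial (k - 2 * m) : ℝ)) *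
            H (k - 2 * m) x :=
  stmt_6_general k ρ x
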